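/- Let E ⊂ ℝ² be a finite set, f : E → [0, ∞), and M > 0. Suppose that for each subset S ⊂ E with #S ≤ 64 there exists F^S ∈ C²₊(ℝ²) with ‖F^S‖_{C²(ℝ²)} ≤ M and F^S = f on S. Then Γ₊^♯(x, 16, M) ≠ ∅ for every x ∈ ℝ². -/

import Mathlib

noncomputable section

/-- The plane `ℝ²` with the Euclidean metric. -/
abbrev V2 : Type := EuclideanSpace ℝ (Fin 2)

/-- Partial derivative of `F : ℝ² → ℝ` in the `i`-th coordinate direction. -/
noncomputable def pd (i : Fin 2) (F : V2 → ℝ) : V2 → ℝ :=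
  fun x => fderiv ℝ F x (EuclideanSpace.single i 1)

/-- `Σ_{|α| ≤ 2} |∂^α F(x)|²`, the sum over all multi-indices `α` of order at most `2`. -/
noncomputable def c2SqAt (F : V2 → ℝ) (x : V2) : ℝ :=
  (F x) ^ 2 + (pd 0 F x) ^ 2 + (pd 1 F x) ^ 2 +
    (pd 0 (pd 0 F) x) ^ 2 + (pd 0 (pd 1 F) x) ^ 2 + (pd 1 (pd 1 F) x) ^ 2

/-- `‖F‖_{C²(ℝ²)} := sup_x (Σ_{|α|≤2} |∂^α F(x)|²)^{1/2} ≤ M`. -/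
def C2NormLE (F : V2 → ℝ) (M : ℝ) : Prop :=
  ∀ x : V2, Real.sqrt (c2SqAt F x) ≤ M

/-- The 1-jet of `F` at `x`: `𝒥_x F (y) = F(x) + ∇F(x) · (y − x)`. -/
noncomputable def jet (x : V2) (F : V2 → ℝ) : V2 → ℝ :=
  fun y => F x + fderiv ℝ F x (y - x)

/-- `Γ₊(x, S, M)`: the 1-jets at `x` of nonnegative `C²` functions `F` with
`‖F‖_{C²(ℝ²)} ≤ M` and `F = f` on `S`. -/
def GammaPlus (f : V2 → ℝ) (x : V2) (S : Finset V2) (M : ℝ) : Set (V2 → ℝ) :=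
  {P | ∃ F : V2 → ℝ, ContDiff ℝ 2 F ∧ (∀ y : V2, 0 ≤ F y) ∧ C2NormLE F M ∧
        (∀ y ∈ S, F y = f y) ∧ jet x F = P}

/-- `σ(x, S)`: the 1-jets at `x` of `C²` functions `F` with `‖F‖_{C²(ℝ²)} ≤ 1` and
`F = 0` on `S`. -/
def sigmaSet (x : V2) (S : Finset V2) : Set (V2 → ℝ) :=
  {P | ∃ F : V2 → ℝ, ContDiff ℝ 2 F ∧ (∀ y ∈ S, F y = 0) ∧ C2NormLE F 1 ∧
        jet x F = P}

/-- `Γ₊^♯(x, k, M) := ⋂_{S ⊆ E, #S ≤ k} Γ₊(x, S, M)`. -/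
def GammaPlusSharp (E : Finset V2) (f : V2 → ℝ) (x : V2) (k : ℕ) (M : ℝ) :
    Set (V2 → ℝ) :=
  {P | ∀ S : Finset V2, S ⊆ E → S.card ≤ k → P ∈ GammaPlus f x S M}

/-- `σ^♯(x, k) := ⋂_{S ⊆ E, #S ≤ k} σ(x, S)`. -/
def sigmaSharp (E : Finset V2) (x : V2) (k : ℕ) : Set (V2 → ℝ) :=
  {P | ∀ S : Finset V2, S ⊆ E → S.card ≤ k → P ∈ sigmaSet x S}


/-!
The jets at `x` of admissible interpolants on `S` form a convex subset of the 3-dimensional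
space of pairs (value, differential): nonnegativity and interpolation are linear constraints,
and the `C²` bound says that a vector depending linearly on `F` has Euclidean norm `≤ M`.
Any four of these sets with `#S ≤ 16` meet, because an interpolant on the union, which has at
most `64` points, provides a common jet. Helly's theorem in dimension 3 gives a jet common to
all of them.
-/

lemma pd_smul_add_smul {F G : V2 → ℝ} (hF : Differentiable ℝ F)
    (hG : Differentiable ℝ G) (a b : ℝ) (i : Fin 2) :
    pd i (a • F + b • G) = a • pd i F + b • pd i G := by
  ext y
  simp [pd, fderiv_add ((hF y).const_smul a) ((hG y).const_smul b), fderiv_const_smul (hF y),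
    fderiv_const_smul (hG y)]

lemma contDiff_one_pd {F : V2 → ℝ} (hF : ContDiff ℝ 2 F) (i : Fin 2) :
    ContDiff ℝ 1 (pd i F) :=
  (hF.fderiv_right (by norm_num)).clm_apply contDiff_const

def c2Vec (F : V2 → ℝ) (y : V2) : EuclideanSpace ℝ (Fin 6) :=
  !₂[F y, pd 0 F y, pd 1 F y, pd 0 (pd 0 F) y, pd 0 (pd 1 F) y, pd 1 (pd 1 F) y]

lemma sqrt_c2SqAt_eq_norm_c2Vec (F : V2 → ℝ) (y : V2) : √(c2SqAt F y) = ‖c2Vec F y‖ := by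
  simp [EuclideanSpace.norm_eq, c2Vec, Fin.sum_univ_six, c2SqAt]

lemma c2Vec_smul_add_smul {F G : V2 → ℝ} (hF : ContDiff ℝ 2 F) (hG : ContDiff ℝ 2 G)
    (a b : ℝ) (y : V2) : c2Vec (a • F + b • G) y = a • c2Vec F y + b • c2Vec G y := by
  have h1 :=
    pd_smul_add_smul (hF.differentiable (by norm_num)) (hG.differentiable (by norm_num)) a b
  have h2 (j : Fin 2) := pd_smul_add_smul ((contDiff_one_pd hF j).differentiable one_ne_zero)
    ((contDiff_one_pd hG j).differentiable one_ne_zero) a b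
  ext k
  fin_cases k <;> simp [c2Vec, h1, h2]

lemma C2NormLE.smul_add_smul {F G : V2 → ℝ} {M a b : ℝ} (hFM : C2NormLE F M)
    (hF : ContDiff ℝ 2 F) (hG : ContDiff ℝ 2 G) (hGM : C2NormLE G M)
    (ha : 0 ≤ a) (hb : 0 ≤ b) (hab : a + b = 1) : C2NormLE (a • F + b • G) M := by
  intro y
  simp only [C2NormLE, sqrt_c2SqAt_eq_norm_c2Vec] at hFM hGM ⊢
  calc ‖c2Vec (a • F + b • G) y‖ = ‖a • c2Vec F y + b • c2Vec G y‖ := by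
        rw [c2Vec_smul_add_smul hF hG]
    _ ≤ a * ‖c2Vec F y‖ + b * ‖c2Vec G y‖ := by
        simpa [norm_smul, abs_of_nonneg ha, abs_of_nonneg hb] using
          norm_add_le (a • c2Vec F y) (b • c2Vec G y)
    _ ≤ a * M + b * M := by gcongr <;> simp only [hFM, hGM]
    _ = M := by rw [← add_mul, hab, one_mul]

def admissible (f : V2 → ℝ) (M : ℝ) (S : Finset V2) : Set (V2 → ℝ) :=
  {F | ContDiff ℝ 2 F ∧ (∀ y, 0 ≤ F y) ∧ C2NormLE F M ∧ ∀ y ∈ S, F y = f y}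

lemma admissible_anti {f : V2 → ℝ} {M : ℝ} {S T : Finset V2} (hST : S ⊆ T) :
    admissible f M T ⊆ admissible f M S :=
  fun _ ⟨hF, hF0, hFM, hFf⟩ => ⟨hF, hF0, hFM, fun y hy => hFf y (hST hy)⟩

lemma convex_admissible (f : V2 → ℝ) (M : ℝ) (S : Finset V2) :
    Convex ℝ (admissible f M S) := by
  rintro F ⟨hF, hF0, hFM, hFf⟩ G ⟨hG, hG0, hGM, hGf⟩ a b ha hb hab
  refine ⟨(hF.const_smul a).add (hG.const_smul b), fun y => ?_,
    hFM.smul_add_smul hF hG hGM ha hb hab, fun y hy => ?_⟩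
  · simp only [Pi.add_apply, Pi.smul_apply, smul_eq_mul]
    exact add_nonneg (mul_nonneg ha (hF0 y)) (mul_nonneg hb (hG0 y))
  · simp only [Pi.add_apply, Pi.smul_apply, smul_eq_mul, hFf y hy, hGf y hy, ← add_mul, hab,
      one_mul]

lemma gammaPlus_eq_image (f : V2 → ℝ) (x : V2) (S : Finset V2) (M : ℝ) :
    GammaPlus f x S M = jet x '' admissible f M S := by
  ext P
  simp only [GammaPlus, admissible, Set.mem_image, Set.mem_ofPred_eq, and_assoc]

section JetData

variable {E G : Type*} [NormedAddCommGroup E] [NormedSpace ℝ E] [NormedAddCommGroup G]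
  [NormedSpace ℝ G]

def jetData (x : E) (F : E → G) : G × (E →L[ℝ] G) := (F x, fderiv ℝ F x)

lemma convex_image_jetData {x : E} {s : Set (E → G)} (hs : Convex ℝ s)
    (hd : ∀ F ∈ s, DifferentiableAt ℝ F x) : Convex ℝ (jetData x '' s) := by
  rintro _ ⟨F, hF, rfl⟩ _ ⟨G, hG, rfl⟩ a b ha hb hab
  refine ⟨a • F + b • G, hs hF hG ha hb hab, ?_⟩
  have hFx := hd F hF
  have hGx := hd G hG
  simp [jetData, fderiv_add (hFx.const_smul a) (hGx.const_smul b), fderiv_const_smul hFx,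
    fderiv_const_smul hGx]

end JetData

lemma finrank_prod_continuousLinearMap (E : Type*) [NormedAddCommGroup E] [NormedSpace ℝ E]
    [FiniteDimensional ℝ E] :
    Module.finrank ℝ (ℝ × (E →L[ℝ] ℝ)) = Module.finrank ℝ E + 1 := by
  rw [Module.finrank_prod, LinearMap.toContinuousLinearMap.symm.finrank_eq,
    Module.finrank_linearMap]
  simp [add_comm]

theorem GammaPlusSharp_nonempty_general
    (E : Finset V2) (f : V2 → ℝ) (M : ℝ)
    (h : ∀ S : Finset V2, S ⊆ E → S.card ≤ 64 →
      ∃ FS : V2 → ℝ, ContDiff ℝ 2 FS ∧ (∀ y : V2, 0 ≤ FS y) ∧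
        C2NormLE FS M ∧ (∀ x ∈ S, FS x = f x)) :
    ∀ x : V2, (GammaPlusSharp E f x 16 M).Nonempty := by
  intro x
  classical
  let 𝒮 := E.powerset.filter (·.card ≤ 16)
  obtain ⟨p, hp⟩ : (⋂ S ∈ 𝒮, jetData x '' admissible f M S).Nonempty := by
    refine Convex.helly_theorem' (fun S _ => convex_image_jetData (convex_admissible f M S)
      fun F hF => hF.1.differentiable (by norm_num) x) fun I hI hI4 => ?_
    rw [finrank_prod_continuousLinearMap, finrank_euclideanSpace_fin] at hI4
    have hIE : I.biUnion id ⊆ E := Finset.biUnion_subset.2 fun S hS =>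
      Finset.mem_powerset.1 (Finset.mem_filter.1 (hI hS)).1
    have hI64 : (I.biUnion id).card ≤ 64 := (Finset.card_biUnion_le_card_mul I id 16
      fun S hS => (Finset.mem_filter.1 (hI hS)).2).trans (by omega)
    obtain ⟨F, hF⟩ := h _ hIE hI64
    exact ⟨jetData x F, Set.mem_iInter₂.2 fun S hS =>
      ⟨F, admissible_anti (Finset.subset_biUnion_of_mem id hS) hF, rfl⟩⟩
  refine ⟨fun y => p.1 + p.2 (y - x), fun S hSE hS => ?_⟩
  obtain ⟨F, hF, rfl⟩ :=
    Set.mem_iInter₂.1 hp S (Finset.mem_filter.2 ⟨Finset.mem_powerset.2 hSE, hS⟩)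
  rw [gammaPlus_eq_image]
  exact ⟨F, hF, rfl⟩

/-- **Lemma 4.3.** Under the hypothesis of the 2-D Finiteness Principle (every
at-most-`64`-point subset of `E` admits a nonnegative `C²` interpolant of norm `≤ M`),
the set `Γ₊^♯(x, 16, M)` is nonempty for every `x ∈ ℝ²`. -/
theorem GammaPlusSharp_nonempty
    (E : Finset V2) (f : V2 → ℝ) (hf : ∀ y ∈ E, 0 ≤ f y) (M : ℝ) (hM : 0 < M)
    (h : ∀ S : Finset V2, S ⊆ E → S.card ≤ 64 →
      ∃ FS : V2 → ℝ, ContDiff ℝ 2 FS ∧ (∀ y : V2, 0 ≤ FS y) ∧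
        C2NormLE FS M ∧ (∀ x ∈ S, FS x = f x)) :
    ∀ x : V2, (GammaPlusSharp E f x 16 M).Nonempty :=
  GammaPlusSharp_nonempty_general E f M h
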